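/- arXiv:2202.12602 — 6 statements merged into one kernel-verified Lean document; each statement's English description precedes it below -/
import Mathlib

section
/- Let V and H be separable real Hilbert spaces with a continuous and dense embedding V ↪ H, let L : V → H be a bounded linear operator with ‖L v‖_H = ‖v‖_V for all v ∈ V with adjoint L* : H → V', let F : V → V' be Fréchet differentiable and monotone with monotone derivatives DF[w] for every w ∈ V, let ε > 0, and let Q_ε(w) = F(w) + ε L*L w, which is a bijection from V onto V'. Then the inverse R_ε := Q_ε^{-1} : V' → V satisfies: (i) R_ε is Lipschitz continuous with ‖R_ε(v₁) − R_ε(v₂)‖_V ≤ ε^{-1} ‖v₁ − v₂‖_{V'} for all v₁, v₂ ∈ V'; (ii) R_ε is strictly monotone: ⟨v − w, R_ε(v) − R_ε(w)⟩_{V',V} ≥ ε ‖R_ε(v) − R_ε(w)‖_V² for all v, w ∈ V', and this quantity is strictly positive whenever v ≠ w; (iii) R_ε is Fréchet differentiable with DR_ε[v] = (DQ_ε[R_ε(v)])^{-1} for every v ∈ V', and ‖DR_ε[v](ξ)‖_V ≤ ε^{-1} ‖ξ‖_{V'} for all v, ξ ∈ V'. -/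
local notation "⟪" x ", " y "⟫" => @inner ℝ _ _ x y

/-!
`Q_ε` is strongly monotone with constant `ε`, since `F` is monotone and `⟨L*L u, u⟩ = ‖u‖²`.
Testing `Q_ε (R_ε v) - Q_ε (R_ε w) = v - w` against `R_ε v - R_ε w` gives (ii), and bounding
the pairing by `‖v - w‖ ‖R_ε v - R_ε w‖` gives (i). The same estimate for the derivative
`DF[w] + ε L*L` makes it a coercive form, hence by Lax–Milgram an isomorphism `V ≃ V'` whose
inverse has norm at most `ε⁻¹`; since `R_ε` is Lipschitz, the inverse function theorem for a
continuous inverse gives (iii).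
-/

open InnerProductSpace

theorem norm_le_inv_mul_norm_of_mul_sq_le {E : Type*} [SeminormedAddCommGroup E]
    [NormedSpace ℝ E] {c : ℝ} (hc : 0 < c) {f : E →L[ℝ] ℝ} {x : E}
    (h : c * ‖x‖ ^ 2 ≤ f x) : ‖x‖ ≤ c⁻¹ * ‖f‖ := by
  rw [le_inv_mul_iff₀ hc]
  rcases (norm_nonneg x).eq_or_lt with hx | hx
  · rw [← hx, mul_zero]
    exact norm_nonneg f
  · refine le_of_mul_le_mul_right ?_ hx
    calc c * ‖x‖ * ‖x‖ = c * ‖x‖ ^ 2 := by ring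
      _ ≤ f x := h
      _ ≤ ‖f‖ * ‖x‖ := (le_abs_self _).trans (f.le_opNorm x)

section Coercive

variable {V : Type*} [NormedAddCommGroup V] [InnerProductSpace ℝ V] [CompleteSpace V]
  {A : V →L[ℝ] V →L[ℝ] ℝ}

noncomputable def IsCoercive.dualEquiv (hA : IsCoercive A) : V ≃L[ℝ] (V →L[ℝ] ℝ) :=
  hA.continuousLinearEquivOfBilin.trans (toDual ℝ V).toContinuousLinearEquiv

theorem IsCoercive.dualEquiv_apply (hA : IsCoercive A) (u : V) : hA.dualEquiv u = A u := by
  ext w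
  exact hA.continuousLinearEquivOfBilin_apply u w

theorem IsCoercive.coe_dualEquiv (hA : IsCoercive A) :
    (hA.dualEquiv : V →L[ℝ] V →L[ℝ] ℝ) = A :=
  ContinuousLinearMap.ext hA.dualEquiv_apply

end Coercive

section InverseOfStronglyMonotone

variable {E : Type*} [NormedAddCommGroup E] [NormedSpace ℝ E] {c : ℝ}
  {Q : E → E →L[ℝ] ℝ} {R : (E →L[ℝ] ℝ) → E}

theorem mul_norm_sq_le_apply_of_rightInverse
    (hQ : ∀ a b, c * ‖a - b‖ ^ 2 ≤ (Q a - Q b) (a - b)) (hQR : ∀ f, Q (R f) = f)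
    (v w : E →L[ℝ] ℝ) : c * ‖R v - R w‖ ^ 2 ≤ (v - w) (R v - R w) := by
  simpa only [hQR] using hQ (R v) (R w)

theorem norm_sub_le_of_rightInverse (hc : 0 < c)
    (hQ : ∀ a b, c * ‖a - b‖ ^ 2 ≤ (Q a - Q b) (a - b)) (hQR : ∀ f, Q (R f) = f)
    (v w : E →L[ℝ] ℝ) : ‖R v - R w‖ ≤ c⁻¹ * ‖v - w‖ :=
  norm_le_inv_mul_norm_of_mul_sq_le hc (mul_norm_sq_le_apply_of_rightInverse hQ hQR v w)

theorem apply_pos_of_rightInverse (hc : 0 < c)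
    (hQ : ∀ a b, c * ‖a - b‖ ^ 2 ≤ (Q a - Q b) (a - b)) (hQR : ∀ f, Q (R f) = f)
    {v w : E →L[ℝ] ℝ} (hvw : v ≠ w) : 0 < (v - w) (R v - R w) := by
  have hR : R v - R w ≠ 0 := fun h => hvw <| by
    rw [← hQR v, ← hQR w, sub_eq_zero.mp h]
  exact (mul_pos hc (pow_pos (norm_pos_iff.mpr hR) 2)).trans_le
    (mul_norm_sq_le_apply_of_rightInverse hQ hQR v w)

theorem lipschitzWith_of_rightInverse (hc : 0 < c)
    (hQ : ∀ a b, c * ‖a - b‖ ^ 2 ≤ (Q a - Q b) (a - b)) (hQR : ∀ f, Q (R f) = f) :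
    LipschitzWith ⟨c⁻¹, (inv_pos.mpr hc).le⟩ R :=
  LipschitzWith.of_dist_le_mul fun v w => by
    rw [dist_eq_norm, dist_eq_norm]
    exact norm_sub_le_of_rightInverse hc hQ hQR v w

theorem hasFDerivAt_of_rightInverse (hc : 0 < c)
    (hQ : ∀ a b, c * ‖a - b‖ ^ 2 ≤ (Q a - Q b) (a - b)) (hQR : ∀ f, Q (R f) = f)
    {A : E ≃L[ℝ] (E →L[ℝ] ℝ)} {v : E →L[ℝ] ℝ}
    (hQA : HasFDerivAt Q (A : E →L[ℝ] E →L[ℝ] ℝ) (R v)) :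
    HasFDerivAt R (A.symm : (E →L[ℝ] ℝ) →L[ℝ] E) v :=
  hQA.of_local_left_inverse (lipschitzWith_of_rightInverse hc hQ hQR).continuous.continuousAt
    (.of_forall hQR)

end InverseOfStronglyMonotone

theorem stmt_5_general
    {V H : Type*} [NormedAddCommGroup V] [InnerProductSpace ℝ V] [CompleteSpace V]
    [NormedAddCommGroup H] [InnerProductSpace ℝ H]
    (L : V →L[ℝ] H) (hL : ∀ v : V, ‖L v‖ = ‖v‖)
    (B : V →L[ℝ] (V →L[ℝ] ℝ)) (hB : ∀ w v : V, B w v = ⟪L w, L v⟫)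
    (F : V → (V →L[ℝ] ℝ)) (hFdiff : Differentiable ℝ F)
    (hFmono : ∀ v w : V, 0 ≤ (F v - F w) (v - w))
    (hDFmono : ∀ w ξ : V, 0 ≤ fderiv ℝ F w ξ ξ)
    (ε : ℝ) (hε : 0 < ε)
    (Q : V → (V →L[ℝ] ℝ)) (hQ : ∀ w : V, Q w = F w + ε • B w)
    (R : (V →L[ℝ] ℝ) → V)
    (hQR : ∀ f : V →L[ℝ] ℝ, Q (R f) = f) :
    (∀ v₁ v₂ : V →L[ℝ] ℝ, ‖R v₁ - R v₂‖ ≤ ε⁻¹ * ‖v₁ - v₂‖) ∧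
    (∀ v w : V →L[ℝ] ℝ, ε * ‖R v - R w‖ ^ 2 ≤ (v - w) (R v - R w)) ∧
    (∀ v w : V →L[ℝ] ℝ, v ≠ w → 0 < (v - w) (R v - R w)) ∧
    (∀ v : V →L[ℝ] ℝ, ∃ D : (V →L[ℝ] ℝ) →L[ℝ] V,
      HasFDerivAt R D v ∧
      (∀ ξ : V →L[ℝ] ℝ, (fderiv ℝ F (R v) + ε • B) (D ξ) = ξ) ∧
      (∀ u : V, D ((fderiv ℝ F (R v) + ε • B) u) = u) ∧
      (∀ ξ : V →L[ℝ] ℝ, ‖D ξ‖ ≤ ε⁻¹ * ‖ξ‖)) := by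
  have hBnorm : ∀ u, B u u = ‖u‖ ^ 2 := fun u => by
    rw [hB, real_inner_self_eq_norm_sq, hL]
  have hQmono : ∀ a b, ε * ‖a - b‖ ^ 2 ≤ (Q a - Q b) (a - b) := fun a b => by
    have hsplit : (Q a - Q b) (a - b) = (F a - F b) (a - b) + ε * B (a - b) (a - b) := by
      simp only [hQ, sub_apply, add_apply, smul_apply, map_sub, smul_eq_mul]
      ring
    rw [hsplit, hBnorm]
    linarith [hFmono a b]
  refine ⟨norm_sub_le_of_rightInverse hε hQmono hQR,
    mul_norm_sq_le_apply_of_rightInverse hQmono hQR,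
    fun v w => apply_pos_of_rightInverse hε hQmono hQR, fun v => ?_⟩
  set A := fderiv ℝ F (R v) + ε • B
  have hAcoer : ∀ u, ε * ‖u‖ ^ 2 ≤ A u u := fun u => by
    change _ ≤ fderiv ℝ F (R v) u u + ε * B u u
    rw [hBnorm]
    linarith [hDFmono (R v) u]
  have hA : IsCoercive A := ⟨ε, hε, fun u => by simpa only [mul_assoc, sq] using hAcoer u⟩
  have hQA : HasFDerivAt Q A (R v) := by
    rw [funext hQ]
    exact (hFdiff (R v)).hasFDerivAt.add (B.hasFDerivAt.const_smul ε)
  rw [← hA.coe_dualEquiv] at hQA hAcoer ⊢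
  refine ⟨hA.dualEquiv.symm, hasFDerivAt_of_rightInverse hε hQmono hQR hQA,
    hA.dualEquiv.apply_symm_apply, hA.dualEquiv.symm_apply_apply, fun ξ => ?_⟩
  refine norm_le_inv_mul_norm_of_mul_sq_le hε ?_
  simpa only [ContinuousLinearEquiv.coe_coe, ContinuousLinearEquiv.apply_symm_apply]
    using hAcoer (hA.dualEquiv.symm ξ)

/-- In the setting of Statement 4 (continuous dense embedding `V ↪ H`,
`L : V → H` with `‖L v‖_H = ‖v‖_V`, `B = L*L`, `F : V → V'` Fréchet differentiable and
monotone with monotone derivatives, `ε > 0`, `Q_ε = F + ε L*L` a bijection from `V` onto `V'`),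
the inverse `R_ε := Q_ε⁻¹ : V' → V` satisfies:
(i) `‖R_ε(v₁) − R_ε(v₂)‖_V ≤ ε⁻¹ ‖v₁ − v₂‖_{V'}`;
(ii) `⟨v − w, R_ε(v) − R_ε(w)⟩ ≥ ε ‖R_ε(v) − R_ε(w)‖_V²`, strictly positive for `v ≠ w`;
(iii) `R_ε` is Fréchet differentiable with `DR_ε[v] = (DQ_ε[R_ε(v)])⁻¹` and
`‖DR_ε[v](ξ)‖_V ≤ ε⁻¹ ‖ξ‖_{V'}`. -/
theorem stmt_5
    {V H : Type*} [NormedAddCommGroup V] [InnerProductSpace ℝ V] [CompleteSpace V]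
    [NormedAddCommGroup H] [InnerProductSpace ℝ H] [CompleteSpace H]
    [TopologicalSpace.SeparableSpace V] [TopologicalSpace.SeparableSpace H]
    (e : V →L[ℝ] H) (he_inj : Function.Injective e) (he_dense : DenseRange e)
    (L : V →L[ℝ] H) (hL : ∀ v : V, ‖L v‖ = ‖v‖)
    (B : V →L[ℝ] (V →L[ℝ] ℝ)) (hB : ∀ w v : V, B w v = ⟪L w, L v⟫)
    (F : V → (V →L[ℝ] ℝ)) (hFdiff : Differentiable ℝ F)
    (hFmono : ∀ v w : V, 0 ≤ (F v - F w) (v - w))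
    (hDFmono : ∀ w ξ : V, 0 ≤ fderiv ℝ F w ξ ξ)
    (ε : ℝ) (hε : 0 < ε)
    (Q : V → (V →L[ℝ] ℝ)) (hQ : ∀ w : V, Q w = F w + ε • B w)
    (hQbij : Function.Bijective Q)
    (R : (V →L[ℝ] ℝ) → V) (hRQ : ∀ w : V, R (Q w) = w)
    (hQR : ∀ f : V →L[ℝ] ℝ, Q (R f) = f) :
    (∀ v₁ v₂ : V →L[ℝ] ℝ, ‖R v₁ - R v₂‖ ≤ ε⁻¹ * ‖v₁ - v₂‖) ∧
    (∀ v w : V →L[ℝ] ℝ, ε * ‖R v - R w‖ ^ 2 ≤ (v - w) (R v - R w)) ∧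
    (∀ v w : V →L[ℝ] ℝ, v ≠ w → 0 < (v - w) (R v - R w)) ∧
    (∀ v : V →L[ℝ] ℝ, ∃ D : (V →L[ℝ] ℝ) →L[ℝ] V,
      HasFDerivAt R D v ∧
      (∀ ξ : V →L[ℝ] ℝ, (fderiv ℝ F (R v) + ε • B) (D ξ) = ξ) ∧
      (∀ u : V, D ((fderiv ℝ F (R v) + ε • B) u) = u) ∧
      (∀ ξ : V →L[ℝ] ℝ, ‖D ξ‖ ≤ ε⁻¹ * ‖ξ‖)) :=
  stmt_5_general L hL B hB F hFdiff hFmono hDFmono ε hε Q hQ R hQR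
end

section
/- Let Ω ⊂ ℝ^d be a bounded domain, n ∈ ℕ, π_1, …, π_n > 0, let h : [0,∞)ⁿ → [0,∞) be the entropy density h(u) = Σ_{i=1}^n π_i (u_i(log u_i − 1) + 1) (with 0 log 0 := 0) and u_i(w) = exp(w_i/π_i) its gradient inverse. Let V be a separable real Hilbert space with continuous embeddings V ↪ L^∞(Ω;ℝⁿ) and V ↪ L²(Ω;ℝⁿ), let L : V → L²(Ω;ℝⁿ) be a bounded linear operator, and let ε > 0. Suppose v⁰ ∈ L¹(Ω;[0,∞)ⁿ) with h(v⁰) ∈ L¹(Ω), and w ∈ V satisfies ∫_Ω v⁰ · φ dx = ∫_Ω u(w) · φ dx + ε (L w, L φ)_{L²(Ω)} for all φ ∈ V (i.e., v⁰ = u(w) + ε L*L w in V'). Then ∫_Ω h(u(w)) dx + (ε/2) ‖L w‖²_{L²(Ω)} ≤ ∫_Ω h(v⁰) dx. -/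
open MeasureTheory
open scoped ENNReal

local notation "⟪" x ", " y "⟫" => @inner ℝ _ _ x y

/-- Pointwise convexity inequality: `b log b - b t - b + exp t ≥ 0` for `b ≥ 0`. -/
lemma stmt8_aux (t b : ℝ) (hb : 0 ≤ b) :
    0 ≤ b * Real.log b - b * t - b + Real.exp t := by
  rcases hb.eq_or_lt with h | h
  · simp only [← h, zero_mul, sub_zero, zero_sub, neg_zero, zero_add]
    positivity
  · have h1 : Real.log (Real.exp t / b) ≤ Real.exp t / b - 1 :=
      Real.log_le_sub_one_of_pos (by positivity)
    rw [Real.log_div (Real.exp_ne_zero t) h.ne', Real.log_exp] at h1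
    have h2 := mul_le_mul_of_nonneg_left h1 h.le
    rw [mul_sub, mul_sub, mul_div_cancel₀ _ h.ne', mul_one] at h2
    linarith

/-- Let `Ω ⊂ ℝ^d` be a bounded domain, `π_i > 0`, `h` the entropy density
`h(u) = Σ_i π_i (u_i(log u_i − 1) + 1)` and `u_i(w) = exp(w_i/π_i)` its gradient inverse.
Let `V` be a separable real Hilbert space with continuous embeddings `ι : V ↪ L^∞(Ω;ℝⁿ)` and
`e₂ : V ↪ L²(Ω;ℝⁿ)` (compatible), let `L : V → L²(Ω;ℝⁿ)` be bounded linear, and `ε > 0`.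
If `v⁰ ∈ L¹(Ω;[0,∞)ⁿ)` with `h(v⁰) ∈ L¹(Ω)` and `w ∈ V` satisfies
`∫ v⁰·φ dx = ∫ u(w)·φ dx + ε (L w, L φ)_{L²}` for all `φ ∈ V`, then
`∫ h(u(w)) dx + (ε/2)‖L w‖²_{L²} ≤ ∫ h(v⁰) dx`. -/
theorem stmt_8 {d n : ℕ} (Ω : Set (Fin d → ℝ)) (hΩo : IsOpen Ω)
    (hΩb : Bornology.IsBounded Ω)
    (π : Fin n → ℝ) (hπ : ∀ i, 0 < π i)
    {V : Type*} [NormedAddCommGroup V] [InnerProductSpace ℝ V] [CompleteSpace V]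
    [TopologicalSpace.SeparableSpace V]
    (μ : Measure (Fin d → ℝ)) (hμ : μ = volume.restrict Ω)
    (ι : V →L[ℝ] Lp (Fin n → ℝ) ∞ μ) (hιinj : Function.Injective ι)
    (e₂ : V →L[ℝ] Lp (EuclideanSpace ℝ (Fin n)) 2 μ) (he₂inj : Function.Injective e₂)
    (hcompat : ∀ v : V, ∀ᵐ x ∂μ, ∀ i, (e₂ v) x i = (ι v) x i)
    (L : V →L[ℝ] Lp (EuclideanSpace ℝ (Fin n)) 2 μ)
    (ε : ℝ) (hε : 0 < ε)
    (v0 : (Fin d → ℝ) → Fin n → ℝ)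
    (hv0int : Integrable v0 μ)
    (hv0nonneg : ∀ᵐ x ∂μ, ∀ i, 0 ≤ v0 x i)
    (hhv0 : Integrable (fun x => ∑ i, π i * (v0 x i * (Real.log (v0 x i) - 1) + 1)) μ)
    (w : V)
    (heq : ∀ φ : V, (∫ x, (∑ i, v0 x i * (ι φ) x i) ∂μ)
        = (∫ x, (∑ i, Real.exp ((ι w) x i / π i) * (ι φ) x i) ∂μ) + ε * ⟪L w, L φ⟫) :
    (∫ x, (∑ i, π i * (Real.exp ((ι w) x i / π i) * ((ι w) x i / π i - 1) + 1)) ∂μ)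
        + ε / 2 * ‖L w‖ ^ 2
      ≤ ∫ x, (∑ i, π i * (v0 x i * (Real.log (v0 x i) - 1) + 1)) ∂μ := by
  -- the measure is finite
  haveI hfin : IsFiniteMeasure μ := by
    subst hμ
    exact ⟨by rw [Measure.restrict_apply_univ]; exact hΩb.measure_lt_top⟩
  -- W : the L∞ representative
  set W : (Fin d → ℝ) → Fin n → ℝ := ((ι w : Lp (Fin n → ℝ) ∞ μ) : (Fin d → ℝ) → Fin n → ℝ) with hWdef
  have hWaesm : AEStronglyMeasurable W μ := Lp.aestronglyMeasurable (ι w)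
  have hWi : ∀ i, AEStronglyMeasurable (fun x => W x i) μ := fun i =>
    (continuous_apply i).comp_aestronglyMeasurable hWaesm
  have hv0i : ∀ i, AEStronglyMeasurable (fun x => v0 x i) μ := fun i =>
    (continuous_apply i).comp_aestronglyMeasurable hv0int.1
  -- a.e. bound on W
  set M : ℝ := (eLpNormEssSup W μ).toReal with hMdef
  have hWlt : eLpNormEssSup W μ < ⊤ := by
    have := Lp.eLpNorm_lt_top (ι w)
    rwa [eLpNorm_exponent_top] at this
  have hWbd : ∀ᵐ x ∂μ, ∀ i, |W x i| ≤ M := by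
    filter_upwards [ae_le_eLpNormEssSup (f := W) (μ := μ)] with x hx i
    have h1 : (‖W x‖₊ : ℝ≥0∞) ≤ eLpNormEssSup W μ := hx
    have h2 : ‖W x‖ ≤ M := by
      rw [hMdef]
      exact_mod_cast ENNReal.toReal_mono hWlt.ne h1
    calc |W x i| = ‖W x i‖ := rfl
      _ ≤ ‖W x‖ := norm_le_pi_norm (W x) i
      _ ≤ M := h2
  have hM0 : 0 ≤ M := ENNReal.toReal_nonneg
  -- integrability of each piece, coordinatewise
  have hintf2 : Integrable
      (fun x => ∑ i, π i * (Real.exp (W x i / π i) * (W x i / π i - 1) + 1)) μ := by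
    apply integrable_finset_sum
    intro i _
    have hmeas : AEStronglyMeasurable
        (fun x => π i * (Real.exp (W x i / π i) * (W x i / π i - 1) + 1)) μ := by
      have hc : Continuous (fun t : ℝ => π i * (Real.exp (t / π i) * (t / π i - 1) + 1)) := by
        fun_prop
      exact hc.comp_aestronglyMeasurable (hWi i)
    refine (integrable_const (π i * (Real.exp (M / π i) * (M / π i + 1) + 1))).mono' hmeas ?_
    filter_upwards [hWbd] with x hx
    have hb : |W x i / π i| ≤ M / π i := by
      rw [abs_div, abs_of_pos (hπ i)]
      exact div_le_div_of_nonneg_right (hx i) (hπ i).le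
    have h1 : Real.exp (W x i / π i) ≤ Real.exp (M / π i) :=
      Real.exp_le_exp.2 ((le_abs_self _).trans hb)
    have h2 : |W x i / π i - 1| ≤ M / π i + 1 := by
      have := abs_sub_abs_le_abs_sub (W x i / π i) 1
      have h3 := abs_sub (W x i / π i) 1
      calc |W x i / π i - 1| ≤ |W x i / π i| + |(1:ℝ)| := abs_sub _ _
        _ ≤ M / π i + 1 := by rw [abs_one]; linarith
    have hexp : (0:ℝ) < Real.exp (W x i / π i) := Real.exp_pos _
    rw [Real.norm_eq_abs, abs_mul, abs_of_pos (hπ i)]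
    have h4 : |Real.exp (W x i / π i) * (W x i / π i - 1) + 1|
        ≤ Real.exp (M / π i) * (M / π i + 1) + 1 := by
      calc |Real.exp (W x i / π i) * (W x i / π i - 1) + 1|
          ≤ |Real.exp (W x i / π i) * (W x i / π i - 1)| + 1 := by
            have := abs_add_le (Real.exp (W x i / π i) * (W x i / π i - 1)) 1
            simpa using this
        _ = Real.exp (W x i / π i) * |W x i / π i - 1| + 1 := by
            rw [abs_mul, abs_of_pos hexp]
        _ ≤ Real.exp (M / π i) * (M / π i + 1) + 1 := by
            have hnn : (0:ℝ) ≤ |W x i / π i - 1| := abs_nonneg _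
            nlinarith
    exact mul_le_mul_of_nonneg_left h4 (hπ i).le
  have hintvW : Integrable (fun x => ∑ i, v0 x i * W x i) μ := by
    apply integrable_finset_sum
    intro i _
    have hmeas : AEStronglyMeasurable (fun x => v0 x i * W x i) μ := (hv0i i).mul (hWi i)
    have hgi : Integrable (fun x => v0 x i) μ := by
      refine hv0int.norm.mono' (hv0i i) ?_
      filter_upwards with x
      exact norm_le_pi_norm (v0 x) i
    refine ((hgi.norm.const_mul M)).mono' hmeas ?_
    filter_upwards [hWbd] with x hx
    rw [Real.norm_eq_abs, abs_mul]
    calc |v0 x i| * |W x i| ≤ |v0 x i| * M := by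
          exact mul_le_mul_of_nonneg_left (hx i) (abs_nonneg _)
      _ = M * ‖v0 x i‖ := by rw [Real.norm_eq_abs]; ring
  have hintgW : Integrable (fun x => ∑ i, Real.exp (W x i / π i) * W x i) μ := by
    apply integrable_finset_sum
    intro i _
    have hmeas : AEStronglyMeasurable (fun x => Real.exp (W x i / π i) * W x i) μ := by
      have hc : Continuous (fun t : ℝ => Real.exp (t / π i) * t) := by fun_prop
      exact hc.comp_aestronglyMeasurable (hWi i)
    refine (integrable_const (Real.exp (M / π i) * M)).mono' hmeas ?_
    filter_upwards [hWbd] with x hx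
    have hb : |W x i / π i| ≤ M / π i := by
      rw [abs_div, abs_of_pos (hπ i)]
      exact div_le_div_of_nonneg_right (hx i) (hπ i).le
    have h1 : Real.exp (W x i / π i) ≤ Real.exp (M / π i) :=
      Real.exp_le_exp.2 ((le_abs_self _).trans hb)
    rw [Real.norm_eq_abs, abs_mul, abs_of_pos (Real.exp_pos _)]
    have := Real.exp_pos (W x i / π i)
    nlinarith [hx i, abs_nonneg (W x i)]
  -- the key a.e. inequality
  have hkey : ∀ᵐ x ∂μ, 0 ≤
      (∑ i, π i * (v0 x i * (Real.log (v0 x i) - 1) + 1))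
      - (∑ i, π i * (Real.exp (W x i / π i) * (W x i / π i - 1) + 1))
      - ((∑ i, v0 x i * W x i) - (∑ i, Real.exp (W x i / π i) * W x i)) := by
    filter_upwards [hv0nonneg] with x hx
    have : ∀ i ∈ Finset.univ, (0:ℝ) ≤
        (π i * (v0 x i * (Real.log (v0 x i) - 1) + 1)
          - π i * (Real.exp (W x i / π i) * (W x i / π i - 1) + 1))
        - (v0 x i * W x i - Real.exp (W x i / π i) * W x i) := by
      intro i _
      have haux := stmt8_aux (W x i / π i) (v0 x i) (hx i)
      obtain ⟨t, ht⟩ : ∃ t, W x i / π i = t := ⟨_, rfl⟩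
      rw [ht] at haux ⊢
      rw [show W x i = π i * t from by
        rw [← ht, mul_comm]; exact (div_mul_cancel₀ _ (hπ i).ne').symm]
      nlinarith [mul_nonneg (hπ i).le haux]
    have hsum := Finset.sum_nonneg this
    rw [Finset.sum_sub_distrib, Finset.sum_sub_distrib, Finset.sum_sub_distrib] at hsum
    linarith [hsum]
  -- integrate
  have hI : 0 ≤
      (∫ x, (∑ i, π i * (v0 x i * (Real.log (v0 x i) - 1) + 1)) ∂μ)
      - (∫ x, (∑ i, π i * (Real.exp (W x i / π i) * (W x i / π i - 1) + 1)) ∂μ)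
      - ((∫ x, (∑ i, v0 x i * W x i) ∂μ)
        - (∫ x, (∑ i, Real.exp (W x i / π i) * W x i) ∂μ)) := by
    have hA : Integrable (fun x =>
        (∑ i, π i * (v0 x i * (Real.log (v0 x i) - 1) + 1))
        - (∑ i, π i * (Real.exp (W x i / π i) * (W x i / π i - 1) + 1))) μ :=
      hhv0.sub hintf2
    have hB : Integrable (fun x =>
        (∑ i, v0 x i * W x i) - (∑ i, Real.exp (W x i / π i) * W x i)) μ :=
      hintvW.sub hintgW
    have h1 := integral_nonneg_of_ae hkey
    rwa [integral_sub hA hB, integral_sub hhv0 hintf2, integral_sub hintvW hintgW] at h1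
  -- use the weak formulation at φ = w
  have hw := heq w
  have hinner : ⟪L w, L w⟫ = ‖L w‖ ^ 2 := real_inner_self_eq_norm_sq (L w)
  rw [hinner] at hw
  have hnn : (0:ℝ) ≤ ‖L w‖ ^ 2 := sq_nonneg _
  -- conclude
  have : (∫ x, (∑ i, v0 x i * W x i) ∂μ)
      - (∫ x, (∑ i, Real.exp (W x i / π i) * W x i) ∂μ) = ε * ‖L w‖ ^ 2 := by
    rw [hWdef]
    linarith [hw]
  rw [this] at hI
  nlinarith [hI, hnn, hε.le]
end

section
/- Let n ∈ ℕ, let a_{ij} ≥ 0 for i = 1, …, n and j = 0, …, n, and let π_1, …, π_n > 0 satisfy the detailed-balance condition π_i a_{ij} = π_j a_{ji} for all i, j = 1, …, n. Let A(u) ∈ ℝ^{n×n} have entries A_{ij}(u) = δ_{ij}(a_{i0} + Σ_{k=1}^n a_{ik} u_k) + a_{ij} u_i, and let h''(u) = diag(π_1/u_1, …, π_n/u_n) be the Hessian of h(u) = Σ_i π_i(u_i(log u_i − 1) + 1). Then for all u ∈ (0,∞)ⁿ and all z ∈ ℝⁿ: zᵀ h''(u) A(u) z ≥ Σ_{i=1}^n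 π_i (a_{i0} z_i²/u_i + 2 a_{ii} z_i²) + (1/2) Σ_{i≠j} π_i a_{ij} (√(u_j/u_i) z_i + √(u_i/u_j) z_j)². In particular, h''(u)A(u) is positive semidefinite. -/
/-- Let `a_{ij} ≥ 0` (`i = 1,…,n`, `j = 0,…,n`) and `π_i > 0` satisfy the
detailed-balance condition `π_i a_{ij} = π_j a_{ji}`.  Let `A(u)` be the SKT diffusion matrix
`A_{ij}(u) = δ_{ij}(a_{i0} + Σ_k a_{ik} u_k) + a_{ij} u_i` and `h''(u) = diag(π_i/u_i)`.
Then for all `u ∈ (0,∞)ⁿ` and `z ∈ ℝⁿ`: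
`zᵀ h''(u) A(u) z ≥ Σ_i π_i (a_{i0} z_i²/u_i + 2 a_{ii} z_i²)
  + (1/2) Σ_{i≠j} π_i a_{ij} (√(u_j/u_i) z_i + √(u_i/u_j) z_j)²`.
In particular, `h''(u)A(u)` is positive semidefinite. -/
theorem stmt_9 {n : ℕ} (a0 : Fin n → ℝ) (a : Fin n → Fin n → ℝ) (π : Fin n → ℝ)
    (ha0 : ∀ i, 0 ≤ a0 i) (ha : ∀ i j, 0 ≤ a i j) (hπ : ∀ i, 0 < π i)
    (hdb : ∀ i j, π i * a i j = π j * a j i)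
    (u : Fin n → ℝ) (hu : ∀ i, 0 < u i) (z : Fin n → ℝ) :
    (∑ i, π i * (a0 i * z i ^ 2 / u i + 2 * a i i * z i ^ 2))
        + 1 / 2 * ∑ i, ∑ j ∈ Finset.univ.filter (fun j => j ≠ i),
            π i * a i j * (Real.sqrt (u j / u i) * z i + Real.sqrt (u i / u j) * z j) ^ 2
      ≤ ∑ i, ∑ j, z i * (π i / u i)
          * ((if i = j then a0 i + ∑ k, a i k * u k else 0) + a i j * u i) * z j ∧
    0 ≤ ∑ i, ∑ j, z i * (π i / u i)
          * ((if i = j then a0 i + ∑ k, a i k * u k else 0) + a i j * u i) * z j := by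
  have hu0 : ∀ i, u i ≠ 0 := fun i => (hu i).ne'
  -- abbreviations for the pieces
  set A0 : ℝ := ∑ i, π i * a0 i * z i ^ 2 / u i with hA0
  set P : ℝ := ∑ i, ∑ j, π i * a i j * ((u j / u i) * z i ^ 2) with hP
  set Q : ℝ := ∑ i, ∑ j, π i * a i j * (z i * z j) with hQ
  set D : ℝ := ∑ i, π i * a i i * z i ^ 2 with hD
  -- the right-hand quadratic form equals A0 + P + Q
  have hS : (∑ i, ∑ j, z i * (π i / u i)
      * ((if i = j then a0 i + ∑ k, a i k * u k else 0) + a i j * u i) * z j)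
      = A0 + P + Q := by
    have step1 : ∀ i : Fin n, (∑ j, z i * (π i / u i)
        * ((if i = j then a0 i + ∑ k, a i k * u k else 0) + a i j * u i) * z j)
        = (∑ j, (if i = j then z i * (π i / u i) * (a0 i + ∑ k, a i k * u k) * z j else 0))
          + ∑ j, z i * (π i / u i) * (a i j * u i) * z j := by
      intro i
      rw [← Finset.sum_add_distrib]
      refine Finset.sum_congr rfl fun j _ => ?_
      split_ifs with h <;> ring
    have step2 : ∀ i : Fin n,
        (∑ j, (if i = j then z i * (π i / u i) * (a0 i + ∑ k, a i k * u k) * z j else 0))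
        = π i * a0 i * z i ^ 2 / u i + ∑ k, π i * a i k * ((u k / u i) * z i ^ 2) := by
      intro i
      rw [Finset.sum_ite_eq]
      simp only [Finset.mem_univ, if_true]
      have : z i * (π i / u i) * (a0 i + ∑ k, a i k * u k) * z i
          = z i * (π i / u i) * a0 i * z i
            + ∑ k, z i * (π i / u i) * (a i k * u k) * z i := by
        rw [mul_add, add_mul, Finset.mul_sum, Finset.sum_mul]
      rw [this]
      congr 1
      · ring
      · refine Finset.sum_congr rfl fun k _ => ?_
        field_simp [hu0 i]
    have step3 : ∀ i : Fin n, (∑ j, z i * (π i / u i) * (a i j * u i) * z j)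
        = ∑ j, π i * a i j * (z i * z j) := by
      intro i
      refine Finset.sum_congr rfl fun j _ => ?_
      field_simp [hu0 i]
    calc (∑ i, ∑ j, z i * (π i / u i)
          * ((if i = j then a0 i + ∑ k, a i k * u k else 0) + a i j * u i) * z j)
        = ∑ i, ((π i * a0 i * z i ^ 2 / u i
              + ∑ k, π i * a i k * ((u k / u i) * z i ^ 2))
            + ∑ j, π i * a i j * (z i * z j)) := by
          refine Finset.sum_congr rfl fun i _ => ?_
          rw [step1 i, step2 i, step3 i]
      _ = A0 + P + Q := by
          rw [hA0, hP, hQ]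
          rw [Finset.sum_add_distrib, Finset.sum_add_distrib]
  -- the squared terms expand
  have hsq : ∀ i j : Fin n,
      (Real.sqrt (u j / u i) * z i + Real.sqrt (u i / u j) * z j) ^ 2
      = (u j / u i) * z i ^ 2 + 2 * (z i * z j) + (u i / u j) * z j ^ 2 := by
    intro i j
    have h1 : Real.sqrt (u j / u i) ^ 2 = u j / u i :=
      Real.sq_sqrt (div_nonneg (hu j).le (hu i).le)
    have h2 : Real.sqrt (u i / u j) ^ 2 = u i / u j :=
      Real.sq_sqrt (div_nonneg (hu i).le (hu j).le)
    have h3 : Real.sqrt (u j / u i) * Real.sqrt (u i / u j) = 1 := by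
      rw [← Real.sqrt_mul (div_nonneg (hu j).le (hu i).le)]
      have : (u j / u i) * (u i / u j) = 1 := by
        rw [div_mul_div_comm, mul_comm (u j) (u i)]
        exact div_self (mul_ne_zero (hu0 i) (hu0 j))
      rw [this, Real.sqrt_one]
    linear_combination z i ^ 2 * h1 + z j ^ 2 * h2 + 2 * z i * z j * h3
  -- the filtered (off-diagonal) sum
  have hF : (∑ i, ∑ j ∈ Finset.univ.filter (fun j => j ≠ i),
        π i * a i j * (Real.sqrt (u j / u i) * z i + Real.sqrt (u i / u j) * z j) ^ 2)
      = 2 * P + 2 * Q - 4 * D := by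
    have hfull : (∑ i, ∑ j, π i * a i j
          * ((u j / u i) * z i ^ 2 + 2 * (z i * z j) + (u i / u j) * z j ^ 2))
        = 2 * P + 2 * Q := by
      have hsplit : (∑ i, ∑ j, π i * a i j
            * ((u j / u i) * z i ^ 2 + 2 * (z i * z j) + (u i / u j) * z j ^ 2))
          = (∑ i, ∑ j, π i * a i j * ((u j / u i) * z i ^ 2))
            + (∑ i, ∑ j, π i * a i j * (2 * (z i * z j)))
            + (∑ i, ∑ j, π i * a i j * ((u i / u j) * z j ^ 2)) := by
        rw [← Finset.sum_add_distrib, ← Finset.sum_add_distrib]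
        refine Finset.sum_congr rfl fun i _ => ?_
        rw [← Finset.sum_add_distrib, ← Finset.sum_add_distrib]
        exact Finset.sum_congr rfl fun j _ => by ring
      have hRP : (∑ i, ∑ j, π i * a i j * ((u i / u j) * z j ^ 2)) = P := by
        rw [Finset.sum_comm, hP]
        refine Finset.sum_congr rfl fun x _ => Finset.sum_congr rfl fun y _ => ?_
        rw [hdb y x]
      have hQ2 : (∑ i, ∑ j, π i * a i j * (2 * (z i * z j))) = 2 * Q := by
        rw [hQ, Finset.mul_sum]
        refine Finset.sum_congr rfl fun i _ => ?_
        rw [Finset.mul_sum]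
        exact Finset.sum_congr rfl fun j _ => by ring
      rw [hsplit, hRP, hQ2, hP]
      ring
    have hdiag : ∀ i : Fin n, π i * a i i
        * ((u i / u i) * z i ^ 2 + 2 * (z i * z i) + (u i / u i) * z i ^ 2)
        = 4 * (π i * a i i * z i ^ 2) := by
      intro i
      rw [div_self (hu0 i)]
      ring
    calc (∑ i, ∑ j ∈ Finset.univ.filter (fun j => j ≠ i),
          π i * a i j * (Real.sqrt (u j / u i) * z i + Real.sqrt (u i / u j) * z j) ^ 2)
        = ∑ i, ((∑ j, π i * a i j
              * ((u j / u i) * z i ^ 2 + 2 * (z i * z j) + (u i / u j) * z j ^ 2))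
            - π i * a i i
              * ((u i / u i) * z i ^ 2 + 2 * (z i * z i) + (u i / u i) * z i ^ 2)) := by
          refine Finset.sum_congr rfl fun i _ => ?_
          rw [Finset.filter_ne']
          rw [Finset.sum_erase_eq_sub (Finset.mem_univ i)]
          congr 1
          · exact Finset.sum_congr rfl fun j _ => by rw [hsq i j]
          · rw [hsq i i]
      _ = (∑ i, ∑ j, π i * a i j
              * ((u j / u i) * z i ^ 2 + 2 * (z i * z j) + (u i / u j) * z j ^ 2))
            - ∑ i, π i * a i i
              * ((u i / u i) * z i ^ 2 + 2 * (z i * z i) + (u i / u i) * z i ^ 2) := by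
          rw [Finset.sum_sub_distrib]
      _ = 2 * P + 2 * Q - 4 * D := by
          rw [hfull]
          have : (∑ i, π i * a i i
              * ((u i / u i) * z i ^ 2 + 2 * (z i * z i) + (u i / u i) * z i ^ 2))
              = 4 * D := by
            rw [hD, Finset.mul_sum]
            exact Finset.sum_congr rfl fun i _ => hdiag i
          rw [this]
  -- the left-hand first sum
  have hL : (∑ i, π i * (a0 i * z i ^ 2 / u i + 2 * a i i * z i ^ 2)) = A0 + 2 * D := by
    rw [hA0, hD, Finset.mul_sum, ← Finset.sum_add_distrib]
    exact Finset.sum_congr rfl fun i _ => by ring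
  -- nonnegativity of the left-hand side
  have hLnn : (0:ℝ) ≤ (∑ i, π i * (a0 i * z i ^ 2 / u i + 2 * a i i * z i ^ 2))
      + 1 / 2 * ∑ i, ∑ j ∈ Finset.univ.filter (fun j => j ≠ i),
          π i * a i j * (Real.sqrt (u j / u i) * z i + Real.sqrt (u i / u j) * z j) ^ 2 := by
    refine add_nonneg (Finset.sum_nonneg fun i _ => ?_)
      (mul_nonneg (by norm_num)
        (Finset.sum_nonneg fun i _ => Finset.sum_nonneg fun j _ => ?_))
    · exact mul_nonneg (hπ i).le (add_nonneg
        (div_nonneg (mul_nonneg (ha0 i) (sq_nonneg _)) (hu i).le)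
        (mul_nonneg (mul_nonneg (by norm_num) (ha i i)) (sq_nonneg _)))
    · exact mul_nonneg (mul_nonneg (hπ i).le (ha i j)) (sq_nonneg _)
  have hle : (∑ i, π i * (a0 i * z i ^ 2 / u i + 2 * a i i * z i ^ 2))
      + 1 / 2 * ∑ i, ∑ j ∈ Finset.univ.filter (fun j => j ≠ i),
          π i * a i j * (Real.sqrt (u j / u i) * z i + Real.sqrt (u i / u j) * z j) ^ 2
      ≤ ∑ i, ∑ j, z i * (π i / u i)
          * ((if i = j then a0 i + ∑ k, a i k * u k else 0) + a i j * u i) * z j := by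
    rw [hS, hL, hF]
    ring_nf
    exact le_of_eq (by ring)
  exact ⟨hle, le_trans hLnn hle⟩
end

section
/- Let T > 0, let g ∈ L¹(0,T) be nonnegative, and let δ < 2 with δ ≠ 1. Then the double integral ∫₀ᵀ ∫₀ᵀ |t − s|^{−δ} (∫_{min(s,t)}^{max(s,t)} g(r) dr) dt ds is finite. -/
/-!
For `0 ≤ δ` and `r` strictly between `s` and `t`, both `|s - r|` and `|t - r|` are at most
`|t - s|`, so `|t - s| ^ (-δ) ≤ |s - r| ^ (-δ/2) * |t - r| ^ (-δ/2)`. Writing `ofReal` of the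
inner integral as a Lebesgue integral over `r` and applying Tonelli, the double integral is bounded by
`(sup_r ∫₀ᵀ |s - r| ^ (-δ/2) ds)² * ∫₀ᵀ g`, which is finite since `δ/2 < 1`.
For `δ < 0` the same argument runs with the constant `T ^ (-δ/2)` in place of `|s - r| ^ (-δ/2)`.
-/

open MeasureTheory Set Function
open scoped ENNReal

lemma setLIntegral_Ioo_comp_sub_le {T r : ℝ} (hr : r ∈ Icc 0 T) (f : ℝ → ℝ≥0∞) :
    ∫⁻ x in Ioo 0 T, f (x - r) ≤ ∫⁻ y in Icc (-T) T, f y := by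
  calc ∫⁻ x in Ioo 0 T, f (x - r) ≤ ∫⁻ x in (· - r) ⁻¹' Icc (-T) T, f (x - r) :=
        lintegral_mono_set fun x hx => ⟨by linarith [hx.1, hr.2], by linarith [hx.2, hr.1]⟩
    _ = ∫⁻ y in Icc (-T) T, f y :=
        (measurePreserving_sub_right volume r).setLIntegral_comp_preimage_emb
          (measurableEmbedding_subRight r) f _

lemma setLIntegral_Icc_abs_rpow_lt_top (T : ℝ) {p : ℝ} (hp : p < 1) :
    ∫⁻ y in Icc (-T) T, ENNReal.ofReal (|y| ^ (-p)) < ⊤ := by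
  have hloc : LocallyIntegrable (fun y : ℝ => |y| ^ (-p)) :=
    locallyIntegrable_of_norm_le_rpow (C := 1) (by simp) (by simpa using hp)
      (ae_of_all _ fun y => by simp [abs_of_nonneg (Real.rpow_nonneg (abs_nonneg y) _)])
      (continuous_abs.measurable.pow_const _).aestronglyMeasurable
  exact (hloc.integrableOn_isCompact isCompact_Icc).lintegral_lt_top

lemma abs_sub_rpow_neg_le_mul {s t r δ : ℝ} (hδ : 0 ≤ δ) (hr : r ∈ Ioo (min s t) (max s t)) :
    |t - s| ^ (-δ) ≤ |s - r| ^ (-(δ / 2)) * |t - r| ^ (-(δ / 2)) := by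
  have hst : 0 < |t - s| := by
    rw [← max_sub_min_eq_abs]; linarith [hr.1, hr.2]
  have hsr : 0 < |s - r| := abs_pos.2 <| sub_ne_zero.2 <| by
    rintro rfl
    simp only [mem_Ioo, inf_lt_left, not_le, left_lt_sup] at hr
    linarith [hr.1, hr.2]
  have htr : 0 < |t - r| := abs_pos.2 <| sub_ne_zero.2 <| by
    rintro rfl
    simp only [mem_Ioo, inf_lt_right, not_le, right_lt_sup] at hr
    linarith [hr.1, hr.2]
  have hr' : r ∈ uIcc s t := Ioo_subset_Icc_self hr
  have hsr_le : |s - r| ≤ |t - s| := by simpa [abs_sub_comm] using abs_sub_left_of_mem_uIcc hr'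
  have htr_le : |t - r| ≤ |t - s| := by simpa [abs_sub_comm] using abs_sub_right_of_mem_uIcc hr'
  calc |t - s| ^ (-δ) = |t - s| ^ (-(δ / 2)) * |t - s| ^ (-(δ / 2)) := by
        rw [← Real.rpow_add hst]; ring_nf
    _ ≤ |s - r| ^ (-(δ / 2)) * |t - r| ^ (-(δ / 2)) := by
        gcongr ?_ * ?_
        · exact Real.rpow_le_rpow_of_nonpos hsr hsr_le (by linarith)
        · exact Real.rpow_le_rpow_of_nonpos htr htr_le (by linarith)

section Lebesgue

variable {α : Type*} [MeasurableSpace α] {μ : Measure α}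

lemma ofReal_mul_setIntegral_le_setLIntegral {A I : Set α} {g : α → ℝ} {c : ℝ}
    {k : α → ℝ≥0∞} (hA : MeasurableSet A) (hAI : A ⊆ I) (hg : IntegrableOn g A μ)
    (hg0 : ∀ r ∈ A, 0 ≤ g r) (hk : ∀ r ∈ A, ENNReal.ofReal c ≤ k r) :
    ENNReal.ofReal (c * ∫ r in A, g r ∂μ) ≤ ∫⁻ r in I, k r * ENNReal.ofReal (g r) ∂μ := by
  rw [ENNReal.ofReal_mul' (setIntegral_nonneg hA hg0),
    ofReal_integral_eq_lintegral_ofReal hg ((ae_restrict_iff' hA).2 (ae_of_all _ hg0)),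
    ← lintegral_const_mul' _ _ ENNReal.ofReal_ne_top]
  calc ∫⁻ r in A, ENNReal.ofReal c * ENNReal.ofReal (g r) ∂μ
      ≤ ∫⁻ r in A, k r * ENNReal.ofReal (g r) ∂μ :=
        setLIntegral_mono' hA fun r hr => by gcongr; exact hk r hr
    _ ≤ ∫⁻ r in I, k r * ENNReal.ofReal (g r) ∂μ := lintegral_mono_set hAI

lemma lintegral_lintegral_lintegral_mul_le [SFinite μ] {φ : α → α → ℝ≥0∞} {G : α → ℝ≥0∞}
    {C : ℝ≥0∞} (hφ : Measurable (uncurry φ)) (hG : AEMeasurable G μ)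
    (hC : ∀ᵐ r ∂μ, ∫⁻ s, φ s r ∂μ ≤ C) :
    ∫⁻ s, ∫⁻ t, ∫⁻ r, φ s r * φ t r * G r ∂μ ∂μ ∂μ ≤ C * C * ∫⁻ r, G r ∂μ := by
  have hφr (r : α) : Measurable (φ · r) := hφ.comp (measurable_id.prodMk measurable_const)
  calc ∫⁻ s, ∫⁻ t, ∫⁻ r, φ s r * φ t r * G r ∂μ ∂μ ∂μ
      = ∫⁻ s, ∫⁻ r, φ s r * G r * ∫⁻ t, φ t r ∂μ ∂μ ∂μ := by
        refine lintegral_congr fun s => ?_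
        rw [lintegral_lintegral_swap]
        · refine lintegral_congr fun r => ?_
          rw [← lintegral_const_mul _ (hφr r)]
          exact lintegral_congr fun t => by ring
        · exact ((hφ.comp (measurable_const.prodMk measurable_snd)).aemeasurable.mul
            hφ.aemeasurable).mul hG.comp_snd
    _ ≤ ∫⁻ s, ∫⁻ r, φ s r * (G r * C) ∂μ ∂μ :=
        lintegral_mono fun s => lintegral_mono_ae <| hC.mono fun r hr => by
          rw [mul_assoc]; gcongr
    _ = ∫⁻ r, G r * C * ∫⁻ s, φ s r ∂μ ∂μ := by
        rw [lintegral_lintegral_swap (hφ.aemeasurable.mul (hG.mul_const C).comp_snd)]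
        refine lintegral_congr fun r => ?_
        rw [← lintegral_const_mul _ (hφr r)]
        exact lintegral_congr fun s => by ring
    _ ≤ ∫⁻ r, G r * C * C ∂μ := lintegral_mono_ae <| hC.mono fun r hr => by gcongr
    _ = C * C * ∫⁻ r, G r ∂μ := by
        rw [← lintegral_const_mul'' _ hG]
        exact lintegral_congr fun r => by ring

end Lebesgue

lemma setLIntegral_setLIntegral_rpow_mul_setIntegral_lt_top {I : Set ℝ} [I.OrdConnected]
    {g : ℝ → ℝ} (hg : IntegrableOn g I) (hg0 : ∀ r ∈ I, 0 ≤ g r) {δ : ℝ}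
    {φ : ℝ → ℝ → ℝ≥0∞} (hφ : Measurable (uncurry φ)) {C : ℝ≥0∞} (hC : C < ⊤)
    (hφC : ∀ r ∈ I, ∫⁻ s in I, φ s r ≤ C)
    (hk : ∀ s ∈ I, ∀ t ∈ I, ∀ r ∈ Ioo (min s t) (max s t),
      ENNReal.ofReal (|t - s| ^ (-δ)) ≤ φ s r * φ t r) :
    (∫⁻ s in I, ∫⁻ t in I,
        ENNReal.ofReal (|t - s| ^ (-δ) * ∫ r in Ioo (min s t) (max s t), g r)) < ⊤ := by
  have hI : MeasurableSet I := Set.OrdConnected.measurableSet ‹_›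
  have hsub : ∀ s ∈ I, ∀ t ∈ I, Ioo (min s t) (max s t) ⊆ I := fun s hs t ht =>
    Ioo_subset_Icc_self.trans (OrdConnected.uIcc_subset ‹_› hs ht)
  calc (∫⁻ s in I, ∫⁻ t in I,
        ENNReal.ofReal (|t - s| ^ (-δ) * ∫ r in Ioo (min s t) (max s t), g r))
      ≤ ∫⁻ s in I, ∫⁻ t in I, ∫⁻ r in I, φ s r * φ t r * ENNReal.ofReal (g r) :=
        setLIntegral_mono' hI fun s hs => setLIntegral_mono' hI fun t ht =>
          ofReal_mul_setIntegral_le_setLIntegral measurableSet_Ioo (hsub s hs t ht)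
            (hg.mono_set (hsub s hs t ht)) (fun r hr => hg0 r (hsub s hs t ht hr))
            (hk s hs t ht)
    _ ≤ C * C * ∫⁻ r in I, ENNReal.ofReal (g r) :=
        lintegral_lintegral_lintegral_mul_le hφ hg.1.aemeasurable.ennreal_ofReal
          (ae_restrict_of_forall_mem hI hφC)
    _ < ⊤ := ENNReal.mul_lt_top (ENNReal.mul_lt_top hC hC) hg.lintegral_lt_top

theorem stmt_11_general (T : ℝ) (hT : 0 < T) (g : ℝ → ℝ)
    (hg : IntegrableOn g (Set.Ioo 0 T))
    (hg0 : ∀ r ∈ Set.Ioo (0 : ℝ) T, 0 ≤ g r)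
    (δ : ℝ) (hδ2 : δ < 2) :
    (∫⁻ s in Set.Ioo (0 : ℝ) T, ∫⁻ t in Set.Ioo (0 : ℝ) T,
        ENNReal.ofReal (|t - s| ^ (-δ) * ∫ r in Set.Ioo (min s t) (max s t), g r)) < ⊤ := by
  rcases le_or_gt 0 δ with hδ | hδ
  · refine setLIntegral_setLIntegral_rpow_mul_setIntegral_lt_top hg hg0
      (φ := fun s r => ENNReal.ofReal (|s - r| ^ (-(δ / 2)))) (by fun_prop)
      (setLIntegral_Icc_abs_rpow_lt_top T (p := δ / 2) (by linarith))
      (fun r hr => setLIntegral_Ioo_comp_sub_le (Ioo_subset_Icc_self hr) _)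
      (fun s _ t _ r hr => ?_)
    rw [← ENNReal.ofReal_mul (by positivity)]
    exact ENNReal.ofReal_le_ofReal (abs_sub_rpow_neg_le_mul hδ hr)
  · refine setLIntegral_setLIntegral_rpow_mul_setIntegral_lt_top hg hg0
      (φ := fun _ _ => ENNReal.ofReal (T ^ (-(δ / 2)))) measurable_const
      (ENNReal.mul_lt_top ENNReal.ofReal_lt_top measure_Ioo_lt_top)
      (fun r _ => (setLIntegral_const _ _).le) (fun s hs t ht _ _ => ?_)
    rw [← ENNReal.ofReal_mul (by positivity), ← Real.rpow_add hT, ← neg_add, add_halves]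
    have hst : |t - s| ≤ T := abs_sub_le_iff.2 ⟨by linarith [hs.1, ht.2], by linarith [hs.2, ht.1]⟩
    exact ENNReal.ofReal_le_ofReal (Real.rpow_le_rpow (abs_nonneg _) hst (by linarith))

/-- Let `T > 0`, let `g ∈ L¹(0,T)` be nonnegative, and let `δ < 2` with
`δ ≠ 1`.  Then the double integral
`∫₀ᵀ ∫₀ᵀ |t − s|^{−δ} (∫_{min(s,t)}^{max(s,t)} g(r) dr) dt ds` is finite. -/
theorem stmt_11 (T : ℝ) (hT : 0 < T) (g : ℝ → ℝ)
    (hg : IntegrableOn g (Set.Ioo 0 T))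
    (hg0 : ∀ r ∈ Set.Ioo (0 : ℝ) T, 0 ≤ g r)
    (δ : ℝ) (hδ2 : δ < 2) (hδ1 : δ ≠ 1) :
    (∫⁻ s in Set.Ioo (0 : ℝ) T, ∫⁻ t in Set.Ioo (0 : ℝ) T,
        ENNReal.ofReal (|t - s| ^ (-δ) * ∫ r in Set.Ioo (min s t) (max s t), g r)) < ⊤ :=
  stmt_11_general T hT g hg hg0 δ hδ2
end

section
/- Let Ω ⊂ ℝ^d be a bounded domain, T > 0, n ∈ ℕ, π_1, …, π_n > 0, η > 0, and let h(u) = Σ_{i=1}^n π_i(u_i(log u_i − 1) + 1) and s(x) = x/(1 + x^{1/2+η}) for x ≥ 0. Then there exists a constant C > 0, depending only on Ω, T, n, π, and η, such that for every measurable u : Ω × (0,T) → (0,∞)ⁿ with h(u) ∈ L¹(Ω × (0,T)): (i) { ∫₀ᵀ Σ_{i=1}^n ( ∫_Ω π_i s(u_i(x,t)) log u_i(x,t) dx )² dt }^{1/2} ≤ C (1 + ∫₀ᵀ ∫_Ω h(u(x,t)) dx dt), and (ii) ∫₀ᵀ Σ_{i=1}^n ∫_Ω π_i s(u_i(x,t))²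 / u_i(x,t) dx dt ≤ C. -/
/-!
The pointwise estimate behind (i) is `(s(x) log x)² ≤ 1 + (e + ℓ(x))/η`, where
`s = noiseAmplitude η` and `ℓ = entropyDensity`. For `x ≤ 1` it holds because `s(x) ≤ x` and
`|x log x| ≤ 1`; for `x ≥ 1` the exponent `1/2 + η` gives `s(x)² ≤ x^{1−2η}`, and the spare
factor `x^{2η}` absorbs one logarithm, `log x ≤ x^{2η}/(2η)`, leaving
`x log x/(2η) ≤ (2ℓ(x) + e)/(2η)`. Cauchy–Schwarz on `Ω` turns this into
`Σᵢ (∫_Ω πᵢ s(uᵢ) log uᵢ)² ≤ |Ω| (c₁ + c₂ ∫_Ω h(u))`, and integrating in time and taking square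
roots gives (i). For (ii), `s(x)² ≤ x`, so the integrand is at most `πᵢ`.
-/

open MeasureTheory Set

section

open Real

noncomputable def noiseAmplitude (η x : ℝ) : ℝ := x / (1 + x ^ ((1 : ℝ) / 2 + η))

@[fun_prop]
lemma measurable_noiseAmplitude (η : ℝ) : Measurable (noiseAmplitude η) := by
  unfold noiseAmplitude; fun_prop

noncomputable def entropyDensity (x : ℝ) : ℝ := x * (log x - 1) + 1

lemma entropyDensity_nonneg {x : ℝ} (hx : 0 ≤ x) : 0 ≤ entropyDensity x :=
  (InformationTheory.klFun_nonneg hx).trans_eq <| by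
    rw [InformationTheory.klFun, entropyDensity]; ring

lemma two_mul_sub_exp_one_le_mul_log {x : ℝ} (hx : 0 < x) : 2 * x - exp 1 ≤ x * log x := by
  have h := log_le_sub_one_of_pos (div_pos (exp_pos 1) hx)
  rw [log_div (exp_pos 1).ne' hx.ne', log_exp] at h
  have := (le_div_iff₀ hx).1 (by linarith : 2 - log x ≤ exp 1 / x)
  linarith

lemma mul_log_le_two_mul_entropyDensity_add_exp_one {x : ℝ} (hx : 0 < x) :
    x * log x ≤ 2 * entropyDensity x + exp 1 := by
  have := two_mul_sub_exp_one_le_mul_log hx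
  rw [entropyDensity]
  linarith

lemma noiseAmplitude_nonneg (η : ℝ) {x : ℝ} (hx : 0 ≤ x) : 0 ≤ noiseAmplitude η x := by
  unfold noiseAmplitude; positivity

lemma noiseAmplitude_le_self (η : ℝ) {x : ℝ} (hx : 0 ≤ x) : noiseAmplitude η x ≤ x :=
  div_le_self hx (le_add_of_nonneg_right (rpow_nonneg hx _))

lemma sq_noiseAmplitude_le_rpow (η : ℝ) {x : ℝ} (hx : 0 < x) :
    noiseAmplitude η x ^ 2 ≤ x ^ (1 - 2 * η) := by
  have hs : noiseAmplitude η x ≤ x ^ ((1 : ℝ) / 2 - η) :=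
    calc noiseAmplitude η x ≤ x / x ^ ((1 : ℝ) / 2 + η) :=
          div_le_div_of_nonneg_left hx.le (rpow_pos_of_pos hx _) (by linarith)
      _ = x ^ ((1 : ℝ) / 2 - η) := by
          rw [show (1 : ℝ) / 2 - η = 1 - (1 / 2 + η) by ring, rpow_sub hx, rpow_one]
  calc noiseAmplitude η x ^ 2 ≤ (x ^ ((1 : ℝ) / 2 - η)) ^ 2 :=
        pow_le_pow_left₀ (noiseAmplitude_nonneg η hx.le) hs 2
    _ = x ^ (1 - 2 * η) := by rw [← rpow_natCast, ← rpow_mul hx.le]; ring_nf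

lemma sq_noiseAmplitude_le_self {η x : ℝ} (hη : 0 ≤ η) (hx : 0 < x) :
    noiseAmplitude η x ^ 2 ≤ x := by
  rcases le_total x 1 with hx1 | hx1
  · calc noiseAmplitude η x ^ 2 ≤ x ^ 2 :=
          pow_le_pow_left₀ (noiseAmplitude_nonneg η hx.le) (noiseAmplitude_le_self η hx.le) 2
      _ ≤ x := by nlinarith
  · calc noiseAmplitude η x ^ 2 ≤ x ^ (1 - 2 * η) := sq_noiseAmplitude_le_rpow η hx
      _ ≤ x ^ (1 : ℝ) := rpow_le_rpow_of_exponent_le hx1 (by linarith)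
      _ = x := rpow_one x

lemma sq_noiseAmplitude_mul_log_le {η x : ℝ} (hη : 0 < η) (hx : 0 < x) :
    (noiseAmplitude η x * log x) ^ 2 ≤ 1 + exp 1 / η + entropyDensity x / η := by
  rcases le_total x 1 with hx1 | hx1
  · have h1 : (noiseAmplitude η x * log x) ^ 2 ≤ (log x * x) ^ 2 := by
      rw [← sq_abs, ← sq_abs (log x * x), abs_mul, abs_mul, mul_comm]
      gcongr
      · exact noiseAmplitude_nonneg η hx.le
      exact noiseAmplitude_le_self η hx.le
    have h2 : (log x * x) ^ 2 ≤ 1 := by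
      rw [← sq_abs]
      have := abs_log_mul_self_lt x hx hx1
      nlinarith [abs_nonneg (log x * x)]
    have : 0 ≤ exp 1 / η + entropyDensity x / η := by
      have := entropyDensity_nonneg hx.le
      positivity
    linarith
  · have hlog : 0 ≤ log x := log_nonneg hx1
    have hrpow : x ^ (1 - 2 * η) * x ^ (2 * η) = x := by rw [← rpow_add hx]; simp
    have hexp : exp 1 / (2 * η) ≤ exp 1 / η :=
      div_le_div_of_nonneg_left (exp_pos 1).le hη (by linarith)
    calc (noiseAmplitude η x * log x) ^ 2 = noiseAmplitude η x ^ 2 * (log x * log x) := by ring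
      _ ≤ x ^ (1 - 2 * η) * (log x * (x ^ (2 * η) / (2 * η))) := by
          gcongr
          · exact sq_noiseAmplitude_le_rpow η hx
          · exact log_le_rpow_div hx.le (by linarith)
      _ = x * log x / (2 * η) := by linear_combination log x / (2 * η) * hrpow
      _ ≤ (2 * entropyDensity x + exp 1) / (2 * η) := by
          gcongr; exact mul_log_le_two_mul_entropyDensity_add_exp_one hx
      _ = entropyDensity x / η + exp 1 / (2 * η) := by field_simp
      _ ≤ 1 + exp 1 / η + entropyDensity x / η := by linarith

end

noncomputable def entropy {ι : Type*} [Fintype ι] (π v : ι → ℝ) : ℝ :=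
  ∑ i, π i * entropyDensity (v i)

section

variable {ι : Type*} [Fintype ι] {π : ι → ℝ} {η : ℝ}

lemma entropy_nonneg (hπ : ∀ i, 0 ≤ π i) {v : ι → ℝ} (hv : ∀ i, 0 < v i) : 0 ≤ entropy π v :=
  Finset.sum_nonneg fun i _ => mul_nonneg (hπ i) (entropyDensity_nonneg (hv i).le)

lemma sum_sq_mul_noiseAmplitude_mul_log_le (hπ : ∀ i, 0 ≤ π i) (hη : 0 < η) {v : ι → ℝ}
    (hv : ∀ i, 0 < v i) :
    ∑ i, (π i * noiseAmplitude η (v i) * Real.log (v i)) ^ 2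
      ≤ (∑ i, π i ^ 2) * (1 + Real.exp 1 / η) + (∑ i, π i) / η * entropy π v := by
  rw [entropy, Finset.sum_mul, Finset.mul_sum, ← Finset.sum_add_distrib]
  refine Finset.sum_le_sum fun i _ => ?_
  have hℓ : 0 ≤ π i * entropyDensity (v i) := mul_nonneg (hπ i) (entropyDensity_nonneg (hv i).le)
  have hπi : π i ≤ ∑ j, π j := Finset.single_le_sum (fun j _ => hπ j) (Finset.mem_univ i)
  calc (π i * noiseAmplitude η (v i) * Real.log (v i)) ^ 2
      = π i ^ 2 * (noiseAmplitude η (v i) * Real.log (v i)) ^ 2 := by ring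
    _ ≤ π i ^ 2 * (1 + Real.exp 1 / η + entropyDensity (v i) / η) :=
        mul_le_mul_of_nonneg_left (sq_noiseAmplitude_mul_log_le hη (hv i)) (sq_nonneg _)
    _ = π i ^ 2 * (1 + Real.exp 1 / η) + π i / η * (π i * entropyDensity (v i)) := by ring
    _ ≤ π i ^ 2 * (1 + Real.exp 1 / η) + (∑ j, π j) / η * (π i * entropyDensity (v i)) := by
        gcongr

end

section

variable {α : Type*} [MeasurableSpace α] {μ : Measure α} [IsFiniteMeasure μ]

lemma sq_integral_le_measureReal_mul_integral_sq {f : α → ℝ} (hf : MemLp f 2 μ) :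
    (∫ x, f x ∂μ) ^ 2 ≤ μ.real univ * ∫ x, f x ^ 2 ∂μ := by
  rcases eq_zero_or_neZero μ with rfl | hμ
  · simp
  have hV : 0 < μ.real univ := by
    rw [measureReal_def]
    exact ENNReal.toReal_pos (NeZero.ne _) (measure_ne_top μ univ)
  have jensen := (even_two.convexOn_pow (𝕜 := ℝ)).map_average_le (continuousOn_pow 2)
    isClosed_univ (ae_of_all _ fun _ => mem_univ _) (hf.integrable one_le_two) hf.integrable_sq
  simp only [average_eq, smul_eq_mul] at jensen
  rwa [mul_pow, inv_pow, inv_mul_le_iff₀ (by positivity), ← mul_assoc, sq (μ.real univ),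
    mul_assoc _ _ (μ.real univ)⁻¹, mul_inv_cancel₀ hV.ne', mul_one] at jensen

lemma sum_sq_integral_le {ι : Type*} [Fintype ι] {f : ι → α → ℝ} {g : α → ℝ}
    (hf : ∀ i, AEStronglyMeasurable (f i) μ) (hg : Integrable g μ)
    (hfg : ∀ x, ∑ i, f i x ^ 2 ≤ g x) :
    ∑ i, (∫ x, f i x ∂μ) ^ 2 ≤ μ.real univ * ∫ x, g x ∂μ := by
  have hsq : ∀ i, Integrable (fun x => f i x ^ 2) μ := fun i =>
    hg.mono' ((hf i).pow 2) (ae_of_all _ fun x => by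
      rw [Real.norm_eq_abs, abs_of_nonneg (sq_nonneg _)]
      exact (Finset.single_le_sum (fun j _ => sq_nonneg (f j x)) (Finset.mem_univ i)).trans
        (hfg x))
  calc ∑ i, (∫ x, f i x ∂μ) ^ 2 ≤ ∑ i, μ.real univ * ∫ x, f i x ^ 2 ∂μ :=
        Finset.sum_le_sum fun i _ =>
          sq_integral_le_measureReal_mul_integral_sq
            ((memLp_two_iff_integrable_sq (hf i)).2 (hsq i))
    _ = μ.real univ * ∫ x, ∑ i, f i x ^ 2 ∂μ := by
        rw [← Finset.mul_sum, integral_finsetSum _ fun i _ => hsq i]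
    _ ≤ μ.real univ * ∫ x, g x ∂μ :=
        mul_le_mul_of_nonneg_left (integral_mono (integrable_finsetSum _ fun i _ => hsq i) hg hfg)
          measureReal_nonneg

variable {ι : Type*} [Fintype ι] {π : ι → ℝ} {η : ℝ}

lemma sum_sq_integral_noiseAmplitude_mul_log_le (hπ : ∀ i, 0 ≤ π i) (hη : 0 < η)
    {v : α → ι → ℝ} (hv : Measurable v) (hpos : ∀ x i, 0 < v x i)
    (hint : Integrable (fun x => entropy π (v x)) μ) :
    ∑ i, (∫ x, π i * noiseAmplitude η (v x i) * Real.log (v x i) ∂μ) ^ 2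
      ≤ μ.real univ * ((∑ i, π i ^ 2) * (1 + Real.exp 1 / η) * μ.real univ
        + (∑ i, π i) / η * ∫ x, entropy π (v x) ∂μ) := by
  refine (sum_sq_integral_le (fun i => by fun_prop)
    (g := fun x => (∑ i, π i ^ 2) * (1 + Real.exp 1 / η) + (∑ i, π i) / η * entropy π (v x))
    ((integrable_const _).add (hint.const_mul _))
    fun x => sum_sq_mul_noiseAmplitude_mul_log_le hπ hη (hpos x)).trans_eq ?_
  rw [integral_add (integrable_const _) (hint.const_mul _), integral_const, integral_const_mul,
    smul_eq_mul]
  ring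

variable {β : Type*} [MeasurableSpace β] {ν : Measure β} [IsFiniteMeasure ν]

lemma integral_sum_sq_integral_noiseAmplitude_mul_log_le (hπ : ∀ i, 0 ≤ π i) (hη : 0 < η)
    {u : β → α → ι → ℝ} (hu : Measurable (Function.uncurry u)) (hpos : ∀ t x i, 0 < u t x i)
    (hint : Integrable (fun p : β × α => entropy π (u p.1 p.2)) (ν.prod μ)) :
    ∫ t, ∑ i, (∫ x, π i * noiseAmplitude η (u t x i) * Real.log (u t x i) ∂μ) ^ 2 ∂ν
      ≤ μ.real univ * ((∑ i, π i ^ 2) * (1 + Real.exp 1 / η) * μ.real univ * ν.real univ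
        + (∑ i, π i) / η * ∫ t, ∫ x, entropy π (u t x) ∂μ ∂ν) := by
  have hG : Integrable (fun t => ∫ x, entropy π (u t x) ∂μ) ν := hint.integral_prod_left
  calc _ ≤ ∫ t, μ.real univ * ((∑ i, π i ^ 2) * (1 + Real.exp 1 / η) * μ.real univ
          + (∑ i, π i) / η * ∫ x, entropy π (u t x) ∂μ) ∂ν :=
        integral_mono_of_nonneg (ae_of_all _ fun t => Finset.sum_nonneg fun i _ => sq_nonneg _)
          (((integrable_const _).add (hG.const_mul _)).const_mul _)
          (hint.prod_right_ae.mono fun t ht =>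
            sum_sq_integral_noiseAmplitude_mul_log_le hπ hη (hu.comp measurable_prodMk_left)
              (hpos t) ht)
    _ = _ := by
        rw [integral_const_mul, integral_add (integrable_const _) (hG.const_mul _), integral_const,
          integral_const_mul, smul_eq_mul]
        ring

lemma integral_sum_integral_sq_noiseAmplitude_div_le (hπ : ∀ i, 0 ≤ π i) (hη : 0 ≤ η)
    {u : β → α → ι → ℝ} (hpos : ∀ t x i, 0 < u t x i) :
    ∫ t, ∑ i, ∫ x, π i * noiseAmplitude η (u t x i) ^ 2 / u t x i ∂μ ∂ν
      ≤ (∑ i, π i) * μ.real univ * ν.real univ := by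
  have hpoint : ∀ t x i, ‖π i * noiseAmplitude η (u t x i) ^ 2 / u t x i‖ ≤ π i := by
    intro t x i
    have hs := (div_le_one (hpos t x i)).2 (sq_noiseAmplitude_le_self hη (hpos t x i))
    rw [Real.norm_eq_abs, abs_of_nonneg (by have := hpos t x i; have := hπ i; positivity),
      mul_div_assoc]
    exact mul_le_of_le_one_right (hπ i) hs
  have htime : ∀ t, ‖∑ i, ∫ x, π i * noiseAmplitude η (u t x i) ^ 2 / u t x i ∂μ‖
      ≤ (∑ i, π i) * μ.real univ := fun t =>
    (norm_sum_le _ _).trans <| by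
      rw [Finset.sum_mul]
      exact Finset.sum_le_sum fun i _ =>
        norm_integral_le_of_norm_le_const (ae_of_all _ fun x => hpoint t x i)
  exact (le_abs_self _).trans (norm_integral_le_of_norm_le_const (ae_of_all _ htime))

end

lemma sqrt_add_mul_le_sqrt_add_mul_one_add {a b H : ℝ} (ha : 0 ≤ a) (hb : 0 ≤ b) (hH : 0 ≤ H) :
    Real.sqrt (a + b * H) ≤ Real.sqrt (a + b) * (1 + H) := by
  rw [← Real.sqrt_sq (by linarith : 0 ≤ 1 + H), ← Real.sqrt_mul (by linarith)]
  apply Real.sqrt_le_sqrt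
  nlinarith [mul_nonneg ha hH, mul_nonneg hb hH, mul_nonneg (mul_nonneg ha hH) hH,
    mul_nonneg (mul_nonneg hb hH) hH]

theorem stmt_13_general {d n : ℕ} (Ω : Set (Fin d → ℝ))
    (hΩb : Bornology.IsBounded Ω) (T : ℝ)
    (π : Fin n → ℝ) (hπ : ∀ i, 0 < π i) (η : ℝ) (hη : 0 < η) :
    ∃ C : ℝ, 0 < C ∧
      ∀ u : ℝ → (Fin d → ℝ) → Fin n → ℝ,
        Measurable (Function.uncurry u) →
        (∀ t x i, 0 < u t x i) →
        IntegrableOn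
          (fun p : ℝ × (Fin d → ℝ) =>
            ∑ i, π i * (u p.1 p.2 i * (Real.log (u p.1 p.2 i) - 1) + 1))
          ((Set.Ioo 0 T) ×ˢ Ω) →
        (Real.sqrt (∫ t in Set.Ioo 0 T, ∑ i,
              (∫ x in Ω, π i * (u t x i / (1 + u t x i ^ ((1 : ℝ) / 2 + η)))
                  * Real.log (u t x i)) ^ 2)
            ≤ C * (1 + ∫ t in Set.Ioo 0 T, ∫ x in Ω,
                ∑ i, π i * (u t x i * (Real.log (u t x i) - 1) + 1))) ∧
        ((∫ t in Set.Ioo 0 T, ∑ i, ∫ x in Ω,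
              π i * (u t x i / (1 + u t x i ^ ((1 : ℝ) / 2 + η))) ^ 2 / u t x i)
            ≤ C) := by
  have : IsFiniteMeasure (volume.restrict Ω) := isFiniteMeasure_restrict.2 hΩb.measure_lt_top.ne
  have hπ₀ : ∀ i, 0 ≤ π i := fun i => (hπ i).le
  have hπsum : 0 ≤ ∑ i, π i := Finset.sum_nonneg fun i _ => hπ₀ i
  set V := (volume.restrict Ω).real univ
  set L := (volume.restrict (Ioo 0 T)).real univ
  set a := V * ((∑ i, π i ^ 2) * (1 + Real.exp 1 / η) * V * L)
  set b := V * ((∑ i, π i) / η)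
  set D := (∑ i, π i) * V * L
  have ha : 0 ≤ a := by positivity
  have hb : 0 ≤ b := by positivity
  have hD : 0 ≤ D := by positivity
  refine ⟨Real.sqrt (a + b) + D + 1, by positivity, fun u hu hpos hint => ?_⟩
  replace hint : Integrable (fun p : ℝ × (Fin d → ℝ) => entropy π (u p.1 p.2))
      ((volume.restrict (Ioo 0 T)).prod (volume.restrict Ω)) := by
    rwa [Measure.prod_restrict, ← Measure.volume_eq_prod]
  set H := ∫ t in Ioo 0 T, ∫ x in Ω, entropy π (u t x)
  have hH : 0 ≤ H :=
    integral_nonneg fun t => integral_nonneg fun x => entropy_nonneg hπ₀ (hpos t x)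
  refine ⟨?_, (integral_sum_integral_sq_noiseAmplitude_div_le hπ₀ hη.le hpos).trans
    (by linarith [Real.sqrt_nonneg (a + b)])⟩
  calc _ ≤ Real.sqrt (a + b * H) := Real.sqrt_le_sqrt
        ((integral_sum_sq_integral_noiseAmplitude_mul_log_le hπ₀ hη hu hpos hint).trans_eq
          (by ring))
    _ ≤ Real.sqrt (a + b) * (1 + H) := sqrt_add_mul_le_sqrt_add_mul_one_add ha hb hH
    _ ≤ (Real.sqrt (a + b) + D + 1) * (1 + H) := by gcongr; linarith

/-- Let `Ω ⊂ ℝ^d` be a bounded domain, `T > 0`, `π_i > 0`, `η > 0`, let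
`h(u) = Σ_i π_i(u_i(log u_i − 1) + 1)` and `s(x) = x/(1 + x^{1/2+η})`.  Then there is a
constant `C > 0`, depending only on `Ω, T, n, π, η`, such that for every measurable
`u : Ω × (0,T) → (0,∞)ⁿ` with `h(u) ∈ L¹(Ω × (0,T))`:
(i) `{∫₀ᵀ Σ_i (∫_Ω π_i s(u_i) log u_i dx)² dt}^{1/2} ≤ C (1 + ∫₀ᵀ∫_Ω h(u) dx dt)`, and
(ii) `∫₀ᵀ Σ_i ∫_Ω π_i s(u_i)²/u_i dx dt ≤ C`. -/
theorem stmt_13 {d n : ℕ} (Ω : Set (Fin d → ℝ)) (hΩo : IsOpen Ω)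
    (hΩb : Bornology.IsBounded Ω) (T : ℝ) (hT : 0 < T)
    (π : Fin n → ℝ) (hπ : ∀ i, 0 < π i) (η : ℝ) (hη : 0 < η) :
    ∃ C : ℝ, 0 < C ∧
      ∀ u : ℝ → (Fin d → ℝ) → Fin n → ℝ,
        Measurable (Function.uncurry u) →
        (∀ t x i, 0 < u t x i) →
        IntegrableOn
          (fun p : ℝ × (Fin d → ℝ) =>
            ∑ i, π i * (u p.1 p.2 i * (Real.log (u p.1 p.2 i) - 1) + 1))
          ((Set.Ioo 0 T) ×ˢ Ω) →
        (Real.sqrt (∫ t in Set.Ioo 0 T, ∑ i,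
              (∫ x in Ω, π i * (u t x i / (1 + u t x i ^ ((1 : ℝ) / 2 + η)))
                  * Real.log (u t x i)) ^ 2)
            ≤ C * (1 + ∫ t in Set.Ioo 0 T, ∫ x in Ω,
                ∑ i, π i * (u t x i * (Real.log (u t x i) - 1) + 1))) ∧
        ((∫ t in Set.Ioo 0 T, ∑ i, ∫ x in Ω,
              π i * (u t x i / (1 + u t x i ^ ((1 : ℝ) / 2 + η))) ^ 2 / u t x i)
            ≤ C) :=
  stmt_13_general Ω hΩb T π hπ η hη
end

section
/- Let Ω ⊂ ℝ^d be a bounded domain, n ∈ ℕ, π_1,…,π_n > 0, let h(u) = Σ_{i=1}^n π_i(u_i(log u_i − 1) + 1) with gradient inverse u_i(w) = exp(w_i/π_i), and let V be a separable real Hilbert space with continuous embeddings V ↪ L^∞(Ω;ℝⁿ) and a continuous dense embedding V ↪ H := L²(Ω;ℝⁿ). Let L : V → H be a bounded linear operator with ‖L v‖_H = ‖v‖_V for all v ∈ V, with adjoint L* : H → V'. Define F : V → V' by ⟨F(w), φ⟩_{V',V} = ∫_Ω u(w) · φ dx, let ε > 0, Q_ε = F + εL*L : V → V' (a bijection), and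 R_ε = Q_ε^{-1} : V' → V. Then the regularized entropy functional ℋ : V' → ℝ, ℋ(v) = ∫_Ω h(u(R_ε(v))) dx + (ε/2) ‖L R_ε(v)‖²_{L²(Ω)}, is Fréchet differentiable, and its derivative satisfies Dℋ[v](ξ) = ⟨ξ, R_ε(v)⟩_{V',V} for all v, ξ ∈ V'. -/
open MeasureTheory
open scoped ENNReal

local notation "⟪" x ", " y "⟫" => @inner ℝ _ _ x y

lemma aux_Lp_top_ae_bound {α E : Type*} [MeasurableSpace α] {μ : Measure α}
    [NormedAddCommGroup E] (f : Lp E ∞ μ) : ∀ᵐ x ∂μ, ‖f x‖ ≤ ‖f‖ := by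
  have h := ae_le_eLpNormEssSup (f := (f : α → E)) (μ := μ)
  have hfin : eLpNormEssSup (f : α → E) μ ≠ ⊤ := by
    have := Lp.eLpNorm_ne_top f
    rwa [eLpNorm_exponent_top] at this
  filter_upwards [h] with x hx
  have : ((‖f x‖₊ : ℝ≥0∞)).toReal ≤ (eLpNormEssSup (f : α → E) μ).toReal :=
    ENNReal.toReal_mono hfin hx
  simpa [Lp.norm_def, eLpNorm_exponent_top] using this

lemma aux_integrable {α : Type*} [MeasurableSpace α] {μ : Measure α} [IsFiniteMeasure μ]
    {f g : α → ℝ} (hf : AEStronglyMeasurable f μ) (hg : AEStronglyMeasurable g μ)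
    {Mf Mg : ℝ} (hbf : ∀ᵐ x ∂μ, |f x| ≤ Mf) (hbg : ∀ᵐ x ∂μ, |g x| ≤ Mg)
    {G : ℝ × ℝ → ℝ} (hG : Continuous G) :
    Integrable (fun x => G (f x, g x)) μ := by
  obtain ⟨C, hC⟩ := ((isCompact_Icc (a := -Mf) (b := Mf)).prod
    (isCompact_Icc (a := -Mg) (b := Mg))).exists_bound_of_continuousOn hG.continuousOn
  refine Integrable.mono' (integrable_const C)
    (hG.comp_aestronglyMeasurable (hf.prodMk hg)) ?_
  filter_upwards [hbf, hbg] with x h1 h2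
  exact hC _ ⟨abs_le.mp h1, abs_le.mp h2⟩

set_option maxHeartbeats 2000000

/-- Let `Ω ⊂ ℝ^d` be a bounded domain, `π_i > 0`, `h` the entropy density
with gradient inverse `u_i(w) = exp(w_i/π_i)`, and `V` a separable real Hilbert space with a
continuous embedding `ι : V ↪ L^∞(Ω;ℝⁿ)` and a continuous dense embedding
`e₂ : V ↪ H := L²(Ω;ℝⁿ)`.  Let `L : V → H` be bounded linear with `‖L v‖_H = ‖v‖_V`, let
`B = L*L`, define `F : V → V'` by `⟨F(w),φ⟩ = ∫_Ω u(w)·φ dx`, let `ε > 0`,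
`Q_ε = F + εL*L : V → V'` (a bijection) and `R_ε = Q_ε⁻¹ : V' → V`.  Then the regularized
entropy `ℋ(v) = ∫_Ω h(u(R_ε(v))) dx + (ε/2)‖L R_ε(v)‖²_{L²}` is Fréchet differentiable on
`V'` with `Dℋ[v](ξ) = ⟨ξ, R_ε(v)⟩_{V',V}` for all `v, ξ ∈ V'`. -/
theorem stmt_14 {d n : ℕ} (Ω : Set (Fin d → ℝ)) (hΩo : IsOpen Ω)
    (hΩb : Bornology.IsBounded Ω)
    (π : Fin n → ℝ) (hπ : ∀ i, 0 < π i)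
    {V : Type*} [NormedAddCommGroup V] [InnerProductSpace ℝ V] [CompleteSpace V]
    [TopologicalSpace.SeparableSpace V]
    (μ : Measure (Fin d → ℝ)) (hμ : μ = volume.restrict Ω)
    (ι : V →L[ℝ] Lp (Fin n → ℝ) ∞ μ) (hιinj : Function.Injective ι)
    (e₂ : V →L[ℝ] Lp (EuclideanSpace ℝ (Fin n)) 2 μ) (he₂inj : Function.Injective e₂)
    (he₂dense : DenseRange e₂)
    (hcompat : ∀ v : V, ∀ᵐ x ∂μ, ∀ i, (e₂ v) x i = (ι v) x i)
    (L : V →L[ℝ] Lp (EuclideanSpace ℝ (Fin n)) 2 μ) (hL : ∀ v : V, ‖L v‖ = ‖v‖)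
    (B : V →L[ℝ] (V →L[ℝ] ℝ)) (hB : ∀ w v : V, B w v = ⟪L w, L v⟫)
    (F : V → (V →L[ℝ] ℝ))
    (hF : ∀ w φ : V, F w φ = ∫ x, (∑ i, Real.exp ((ι w) x i / π i) * (ι φ) x i) ∂μ)
    (ε : ℝ) (hε : 0 < ε)
    (Q : V → (V →L[ℝ] ℝ)) (hQ : ∀ w : V, Q w = F w + ε • B w)
    (hQbij : Function.Bijective Q)
    (R : (V →L[ℝ] ℝ) → V) (hRQ : ∀ w : V, R (Q w) = w)
    (hQR : ∀ f : V →L[ℝ] ℝ, Q (R f) = f)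
    (Hfun : (V →L[ℝ] ℝ) → ℝ)
    (hH : ∀ f : V →L[ℝ] ℝ, Hfun f =
      (∫ x, (∑ i, π i * (Real.exp ((ι (R f)) x i / π i) * ((ι (R f)) x i / π i - 1) + 1)) ∂μ)
        + ε / 2 * ‖L (R f)‖ ^ 2) :
    ∀ f : V →L[ℝ] ℝ, HasFDerivAt Hfun (ContinuousLinearMap.apply ℝ ℝ (R f)) f := by
  haveI : IsFiniteMeasure μ := by
    subst hμ
    exact ⟨by simpa [Measure.restrict_apply_univ] using hΩb.measure_lt_top⟩
  -- a.e. coordinatewise bound and measurability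
  have hbd : ∀ w : V, ∀ᵐ x ∂μ, ∀ i, |(ι w) x i| ≤ ‖ι w‖ := by
    intro w
    filter_upwards [aux_Lp_top_ae_bound (ι w)] with x hx i
    calc |(ι w) x i| = ‖(ι w) x i‖ := (Real.norm_eq_abs _).symm
      _ ≤ ‖(ι w) x‖ := norm_le_pi_norm _ i
      _ ≤ ‖ι w‖ := hx
  have hmeas : ∀ (w : V) (i : Fin n), AEStronglyMeasurable (fun x => (ι w) x i) μ :=
    fun w i => (continuous_apply i).comp_aestronglyMeasurable (Lp.aestronglyMeasurable (ι w))
  -- generic integrability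
  have hint : ∀ (w φ : V) (G : Fin n → ℝ × ℝ → ℝ), (∀ i, Continuous (G i)) →
      Integrable (fun x => ∑ i, G i ((ι w) x i, (ι φ) x i)) μ := by
    intro w φ G hG
    apply integrable_finset_sum
    intro i _
    exact aux_integrable (hmeas w i) (hmeas φ i)
      (by filter_upwards [hbd w] with x hx using hx i)
      (by filter_upwards [hbd φ] with x hx using hx i) (hG i)
  have intK : ∀ w : V,
      Integrable (fun x => ∑ i, π i * (Real.exp ((ι w) x i / π i) - 1)) μ := by
    intro w
    exact hint w w (fun i p => π i * (Real.exp (p.1 / π i) - 1)) (fun i => by fun_prop)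
  have intF : ∀ w φ : V,
      Integrable (fun x => ∑ i, Real.exp ((ι w) x i / π i) * (ι φ) x i) μ := by
    intro w φ
    exact hint w φ (fun i p => Real.exp (p.1 / π i) * p.2) (fun i => by fun_prop)
  have intFd : ∀ w w' : V,
      Integrable (fun x => ∑ i, Real.exp ((ι w) x i / π i) * ((ι w') x i - (ι w) x i)) μ := by
    intro w w'
    exact hint w w' (fun i p => Real.exp (p.1 / π i) * (p.2 - p.1)) (fun i => by fun_prop)
  -- the convex potential
  set Kf : V → ℝ := fun w =>
    (∫ x, (∑ i, π i * (Real.exp ((ι w) x i / π i) - 1)) ∂μ) + ε / 2 * ‖L w‖ ^ 2 with hKf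
  -- Q w applied
  have hQapp : ∀ w v : V, Q w v = F w v + ε * B w v := by
    intro w v
    rw [hQ]
    simp [ContinuousLinearMap.add_apply]
  -- Legendre identity
  have hI1 : ∀ f : V →L[ℝ] ℝ, Hfun f = f (R f) - Kf (R f) := by
    intro f
    set w := R f with hw
    have hfw : f w = F w w + ε * B w w := by
      conv_lhs => rw [← hQR f]
      exact hQapp w w
    have hBw : B w w = ‖L w‖ ^ 2 := by rw [hB]; exact real_inner_self_eq_norm_sq _
    have hsub : (∫ x, (∑ i, π i * (Real.exp ((ι w) x i / π i) * ((ι w) x i / π i - 1) + 1)) ∂μ)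
        = (∫ x, (∑ i, Real.exp ((ι w) x i / π i) * (ι w) x i) ∂μ)
          - (∫ x, (∑ i, π i * (Real.exp ((ι w) x i / π i) - 1)) ∂μ) := by
      rw [← integral_sub (intF w w) (intK w)]
      refine integral_congr_ae (Filter.Eventually.of_forall fun x => ?_)
      dsimp only
      rw [← Finset.sum_sub_distrib]
      refine Finset.sum_congr rfl fun i _ => ?_
      have hπi : π i ≠ 0 := (hπ i).ne'
      field_simp
      ring
    rw [hH f, ← hw, hsub]
    simp only [hKf]
    rw [hfw, hF w w, hBw]
    ring
  -- strong convexity gradient inequality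
  have hI2 : ∀ w w' : V, Kf w + (Q w) (w' - w) + ε / 2 * ‖w' - w‖ ^ 2 ≤ Kf w' := by
    intro w w'
    have hFsub : F w (w' - w)
        = ∫ x, (∑ i, Real.exp ((ι w) x i / π i) * ((ι w') x i - (ι w) x i)) ∂μ := by
      rw [hF]
      refine integral_congr_ae ?_
      have h1 : ∀ᵐ x ∂μ, ∀ i, (ι (w' - w)) x i = (ι w') x i - (ι w) x i := by
        have h2 := Lp.coeFn_sub (ι w') (ι w)
        rw [← map_sub] at h2
        filter_upwards [h2] with x hx i
        rw [hx]
        rfl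
      filter_upwards [h1] with x hx
      exact Finset.sum_congr rfl fun i _ => by rw [hx i]
    have hintineq :
        (∫ x, (∑ i, Real.exp ((ι w) x i / π i) * ((ι w') x i - (ι w) x i)) ∂μ)
          ≤ (∫ x, (∑ i, π i * (Real.exp ((ι w') x i / π i) - 1)) ∂μ)
            - (∫ x, (∑ i, π i * (Real.exp ((ι w) x i / π i) - 1)) ∂μ) := by
      rw [← integral_sub (intK w') (intK w)]
      refine integral_mono (intFd w w') ((intK w').sub (intK w)) fun x => ?_
      simp only [Pi.sub_apply]
      rw [← Finset.sum_sub_distrib]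
      refine Finset.sum_le_sum fun i _ => ?_
      set a := (ι w) x i
      set b := (ι w') x i
      have hπi : (0:ℝ) < π i := hπ i
      have key : Real.exp (a / π i) * (b / π i - a / π i) + Real.exp (a / π i)
          ≤ Real.exp (b / π i) := by
        have h1 : b / π i - a / π i + 1 ≤ Real.exp (b / π i - a / π i) :=
          Real.add_one_le_exp _
        have h2 := mul_le_mul_of_nonneg_left h1 (Real.exp_pos (a / π i)).le
        calc Real.exp (a / π i) * (b / π i - a / π i) + Real.exp (a / π i)
            = Real.exp (a / π i) * (b / π i - a / π i + 1) := by ring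
          _ ≤ Real.exp (a / π i) * Real.exp (b / π i - a / π i) := h2
          _ = Real.exp (a / π i + (b / π i - a / π i)) := (Real.exp_add _ _).symm
          _ = Real.exp (b / π i) := by
              rw [show a / π i + (b / π i - a / π i) = b / π i from by ring]
      have h3 : Real.exp (a / π i) * (b - a)
          = π i * (Real.exp (a / π i) * (b / π i - a / π i)) := by
        field_simp
        try ring
      have h4 := mul_le_mul_of_nonneg_left
        (by linarith : Real.exp (a / π i) * (b / π i - a / π i)
          ≤ Real.exp (b / π i) - Real.exp (a / π i)) hπi.le
      calc Real.exp (a / π i) * (b - a)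
          = π i * (Real.exp (a / π i) * (b / π i - a / π i)) := h3
        _ ≤ π i * (Real.exp (b / π i) - Real.exp (a / π i)) := h4
        _ = π i * (Real.exp (b / π i) - 1) - π i * (Real.exp (a / π i) - 1) := by ring
    -- Hilbert part
    have hLsub : L w' - L w = L (w' - w) := (map_sub L w' w).symm
    have hnormL : ‖L w' - L w‖ ^ 2 = ‖w' - w‖ ^ 2 := by rw [hLsub, hL]
    have hid : ‖L w'‖ ^ 2 = ‖L w‖ ^ 2 + 2 * ⟪L w, L w' - L w⟫ + ‖L w' - L w‖ ^ 2 := by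
      have h6 := norm_add_sq_real (L w) (L w' - L w)
      have h7 : L w + (L w' - L w) = L w' := by abel
      rw [h7] at h6
      exact h6
    have hB2 : B w (w' - w) = ⟪L w, L w' - L w⟫ := by rw [hB, map_sub]
    have hQe := hQapp w (w' - w)
    rw [hFsub, hB2] at hQe
    have hid2 : ε / 2 * ‖L w'‖ ^ 2
        = ε / 2 * ‖L w‖ ^ 2 + ε * ⟪L w, L w' - L w⟫ + ε / 2 * ‖L w' - L w‖ ^ 2 := by
      rw [hid]; ring
    have hn2 : ε / 2 * ‖L w' - L w‖ ^ 2 = ε / 2 * ‖w' - w‖ ^ 2 := by rw [hnormL]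
    simp only [hKf]
    rw [hQe]
    linarith only [hintineq, hid2, hn2]
  -- duality: sup property
  have hsup : ∀ (g : V →L[ℝ] ℝ) (w : V), g w - Kf w ≤ Hfun g := by
    intro g w
    have h := hI2 (R g) w
    rw [hQR] at h
    have hn : (0:ℝ) ≤ ε / 2 * ‖w - R g‖ ^ 2 := by positivity
    have hgs : g (w - R g) = g w - g (R g) := map_sub g _ _
    rw [hgs] at h
    rw [hI1 g]
    simp only [hKf] at h ⊢
    linarith only [h, hn]
  -- Lipschitz continuity of R
  have hlip : ∀ f g : V →L[ℝ] ℝ, ‖R g - R f‖ ≤ ‖g - f‖ / ε := by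
    intro f g
    have h1 := hI2 (R f) (R g)
    rw [hQR] at h1
    have h2 := hI2 (R g) (R f)
    rw [hQR] at h2
    have hf1 : f (R g - R f) = f (R g) - f (R f) := map_sub f _ _
    have hg1 : g (R f - R g) = g (R f) - g (R g) := map_sub g _ _
    have hnn : ε / 2 * ‖R f - R g‖ ^ 2 = ε / 2 * ‖R g - R f‖ ^ 2 := by rw [norm_sub_rev]
    have hmono : ε * ‖R g - R f‖ ^ 2 ≤ (g - f) (R g - R f) := by
      have hgf : (g - f) (R g - R f)
          = (g (R g) - g (R f)) - (f (R g) - f (R f)) := by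
        simp only [ContinuousLinearMap.sub_apply, map_sub]
        ring
      rw [hgf]
      rw [hf1] at h1
      rw [hg1] at h2
      simp only [hKf] at h1 h2
      linarith only [h1, h2, hnn]
    have hop : (g - f) (R g - R f) ≤ ‖g - f‖ * ‖R g - R f‖ := by
      have h8 := (g - f).le_opNorm (R g - R f)
      rw [Real.norm_eq_abs] at h8
      exact le_trans (le_abs_self _) h8
    rcases eq_or_lt_of_le (norm_nonneg (R g - R f)) with h0 | h0
    · rw [← h0]; positivity
    · rw [le_div_iff₀ hε]
      have h6 : ε * ‖R g - R f‖ ^ 2 ≤ ‖g - f‖ * ‖R g - R f‖ := hmono.trans hop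
      have h9 : (ε * ‖R g - R f‖) * ‖R g - R f‖ ≤ ‖g - f‖ * ‖R g - R f‖ := by
        calc (ε * ‖R g - R f‖) * ‖R g - R f‖ = ε * ‖R g - R f‖ ^ 2 := by ring
          _ ≤ ‖g - f‖ * ‖R g - R f‖ := h6
      have h10 := le_of_mul_le_mul_right h9 h0
      linarith only [h10]
  -- final assembly
  intro f
  rw [hasFDerivAt_iff_isLittleO_nhds_zero, Asymptotics.isLittleO_iff]
  intro c hc
  have hball : Metric.ball (0 : V →L[ℝ] ℝ) (c * ε) ∈ nhds (0 : V →L[ℝ] ℝ) :=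
    Metric.ball_mem_nhds _ (by positivity)
  filter_upwards [hball] with ξ hξ
  rw [Metric.mem_ball, dist_zero_right] at hξ
  have happ : (ContinuousLinearMap.apply ℝ ℝ (R f)) ξ = ξ (R f) := rfl
  have hlow : Hfun f + ξ (R f) ≤ Hfun (f + ξ) := by
    have h1 := hsup (f + ξ) (R f)
    rw [ContinuousLinearMap.add_apply] at h1
    have h2 := hI1 f
    linarith
  have hup : Hfun (f + ξ) ≤ Hfun f + ξ (R (f + ξ)) := by
    have h1 := hI1 (f + ξ)
    rw [ContinuousLinearMap.add_apply] at h1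
    have h2 := hsup f (R (f + ξ))
    linarith
  have hd : ξ (R (f + ξ)) - ξ (R f) ≤ ‖ξ‖ * (‖ξ‖ / ε) := by
    have h7 : ξ (R (f + ξ)) - ξ (R f) = ξ (R (f + ξ) - R f) := (map_sub ξ _ _).symm
    rw [h7]
    have h4 : ‖f + ξ - f‖ = ‖ξ‖ := by
      congr 1
      abel
    have h3 := hlip f (f + ξ)
    rw [h4] at h3
    have h8 := ξ.le_opNorm (R (f + ξ) - R f)
    rw [Real.norm_eq_abs] at h8
    calc ξ (R (f + ξ) - R f) ≤ ‖ξ‖ * ‖R (f + ξ) - R f‖ :=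
          le_trans (le_abs_self _) h8
      _ ≤ ‖ξ‖ * (‖ξ‖ / ε) := mul_le_mul_of_nonneg_left h3 (norm_nonneg ξ)
  rw [happ, Real.norm_eq_abs, abs_le]
  have hξnn : (0:ℝ) ≤ ‖ξ‖ := norm_nonneg ξ
  have hfr : ‖ξ‖ * (‖ξ‖ / ε) ≤ c * ‖ξ‖ := by
    rw [mul_comm c ‖ξ‖]
    apply mul_le_mul_of_nonneg_left _ hξnn
    rw [div_le_iff₀ hε]
    nlinarith
  have hcξ : (0:ℝ) ≤ c * ‖ξ‖ := mul_nonneg hc.le hξnn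
  constructor
  · linarith
  · linarith
end
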